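/- arXiv:2105.06501 — 4 statements merged into one kernel-verified Lean document; each statement's English description precedes it below -/
import Mathlib

section
/- With α₁, α₂, α₃ the explicit coefficients defined in the context, if a_l ≥ 1, a_r ≥ 1, and v ≥ μ₁ > 0, then α₁·α₂ − α₃ > k₁²·k₄·v/(2k₃) ≥ v·k₁²·√k₂ ≥ μ₁·k₁²·√k₂ > 0. -/
/-- `α₁` coefficient of the characteristic polynomial. -/
noncomputable def alpha1 (b k1 k2 k3 γ1 γ2 v w al ar : ℝ) : ℝ :=
  k1 + (1 + k2 * k3 ^ 2) * v / (2 * k3)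

/-- `α₂` coefficient of the characteristic polynomial. -/
noncomputable def alpha2 (b k1 k2 k3 γ1 γ2 v w al ar : ℝ) : ℝ :=
  let k4 : ℝ := 1 + k2 * k3 ^ 2
  let v1 : ℝ := b * w + 2 * v
  let v2 : ℝ := b * w - 2 * v
  (al * (γ2 * v1 ^ 2 * k3 * (b ^ 2 * k2 + 4 * k4)
        + 8 * ar * b ^ 2 * k2 * (v * (k1 * k4 + k2 * k3 * v) + 2 * k3 * w ^ 2))
      + ar * γ1 * v2 ^ 2 * k3 * (b ^ 2 * k2 + 4 * k4)) / (16 * al * ar * b ^ 2 * k2 * k3)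

/-- `α₃` coefficient of the characteristic polynomial. -/
noncomputable def alpha3 (b k1 k2 k3 γ1 γ2 v w al ar : ℝ) : ℝ :=
  let k4 : ℝ := 1 + k2 * k3 ^ 2
  let v1 : ℝ := b * w + 2 * v
  let v2 : ℝ := b * w - 2 * v
  (ar * (16 * al * b ^ 2 * k2 * v * (k1 * k2 * k3 * v + w ^ 2)
        + γ1 * v2 ^ 2 * (k2 * v * (k3 ^ 2 * (b ^ 2 * k2 + 8) + b ^ 2) + 8 * k1 * k3 * k4))
      + al * γ2 * v1 ^ 2 * (k2 * v * (k3 ^ 2 * (b ^ 2 * k2 + 8) + b ^ 2) + 8 * k1 * k3 * k4))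
    / (32 * al * ar * b ^ 2 * k2 * k3)

/-- `α₄` coefficient of the characteristic polynomial. -/
noncomputable def alpha4 (b k1 k2 k3 γ1 γ2 v w al ar : ℝ) : ℝ :=
  let k4 : ℝ := 1 + k2 * k3 ^ 2
  let v1 : ℝ := b * w + 2 * v
  let v2 : ℝ := b * w - 2 * v
  (γ2 * v1 ^ 2 * (al * ((b * k2 * v + 2 * w) ^ 2 + 4 * w ^ 2 + 8 * k1 * k2 * k3 * v)
        + 2 * γ1 * k4 * v2 ^ 2)
      + ar * γ1 * v2 ^ 2 * ((b * k2 * v - 2 * w) ^ 2 + 4 * w ^ 2 + 8 * k1 * k2 * k3 * v))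
    / (32 * al * ar * b ^ 2 * k2)

/-- `α₅` coefficient of the characteristic polynomial. -/
noncomputable def alpha5 (b k1 k2 k3 γ1 γ2 v w al ar : ℝ) : ℝ :=
  let v1 : ℝ := b * w + 2 * v
  let v2 : ℝ := b * w - 2 * v
  γ1 * γ2 * k3 * v * v1 ^ 2 * v2 ^ 2 / (16 * al * ar * b ^ 2)

/-- lower bound on `α₁·α₂ − α₃`. -/
theorem stmt2 (b k1 k2 k3 γ1 γ2 μ1 : ℝ)
    (hb : 0 < b) (hk1 : 0 < k1) (hk2 : 0 < k2) (hk3 : 0 < k3)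
    (hγ1 : 0 < γ1) (hγ2 : 0 < γ2) (hμ1 : 0 < μ1)
    (v w al ar : ℝ) (hal : 1 ≤ al) (har : 1 ≤ ar) (hv : μ1 ≤ v) :
    k1 ^ 2 * (1 + k2 * k3 ^ 2) * v / (2 * k3) <
        alpha1 b k1 k2 k3 γ1 γ2 v w al ar * alpha2 b k1 k2 k3 γ1 γ2 v w al ar
          - alpha3 b k1 k2 k3 γ1 γ2 v w al ar
      ∧ v * k1 ^ 2 * Real.sqrt k2 ≤ k1 ^ 2 * (1 + k2 * k3 ^ 2) * v / (2 * k3)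
      ∧ μ1 * k1 ^ 2 * Real.sqrt k2 ≤ v * k1 ^ 2 * Real.sqrt k2
      ∧ 0 < μ1 * k1 ^ 2 * Real.sqrt k2 := by
  have hv0 : 0 < v := lt_of_lt_of_le hμ1 hv
  have hal0 : (0:ℝ) < al := lt_of_lt_of_le one_pos hal
  have har0 : (0:ℝ) < ar := lt_of_lt_of_le one_pos har
  have hs : 0 < Real.sqrt k2 := Real.sqrt_pos.mpr hk2
  have hsq : Real.sqrt k2 * Real.sqrt k2 = k2 := Real.mul_self_sqrt hk2.le
  refine ⟨?_, ?_, ?_, ?_⟩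
  · have key : alpha1 b k1 k2 k3 γ1 γ2 v w al ar * alpha2 b k1 k2 k3 γ1 γ2 v w al ar
        - alpha3 b k1 k2 k3 γ1 γ2 v w al ar - k1 ^ 2 * (1 + k2 * k3 ^ 2) * v / (2 * k3)
        = ((al * γ2 * (b * w + 2 * v) ^ 2 + ar * γ1 * (b * w - 2 * v) ^ 2)
            * (2 * k1 * k3 ^ 2 * b ^ 2 * k2 + 4 * k3 * v * (1 + k2 ^ 2 * k3 ^ 4))
          + 8 * al * ar * b ^ 2 * k2 * (4 * k1 * k3 ^ 2 * w ^ 2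
            + k1 * (1 + k2 * k3 ^ 2) ^ 2 * v ^ 2 + k2 * k3 * (1 + k2 * k3 ^ 2) * v ^ 3
            + 2 * k2 * k3 ^ 3 * v * w ^ 2)) / (32 * al * ar * b ^ 2 * k2 * k3 ^ 2) := by
      unfold alpha1 alpha2 alpha3
      field_simp
      ring
    have hpos : 0 < ((al * γ2 * (b * w + 2 * v) ^ 2 + ar * γ1 * (b * w - 2 * v) ^ 2)
            * (2 * k1 * k3 ^ 2 * b ^ 2 * k2 + 4 * k3 * v * (1 + k2 ^ 2 * k3 ^ 4))
          + 8 * al * ar * b ^ 2 * k2 * (4 * k1 * k3 ^ 2 * w ^ 2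
            + k1 * (1 + k2 * k3 ^ 2) ^ 2 * v ^ 2 + k2 * k3 * (1 + k2 * k3 ^ 2) * v ^ 3
            + 2 * k2 * k3 ^ 3 * v * w ^ 2)) / (32 * al * ar * b ^ 2 * k2 * k3 ^ 2) := by
      positivity
    linarith [key ▸ hpos]
  · rw [le_div_iff₀ (by positivity : (0:ℝ) < 2 * k3)]
    have h2 : 2 * Real.sqrt k2 * k3 ≤ 1 + k2 * k3 ^ 2 := by
      nlinarith [sq_nonneg (1 - Real.sqrt k2 * k3)]
    nlinarith [mul_le_mul_of_nonneg_left h2 (show (0:ℝ) ≤ k1 ^ 2 * v by positivity)]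
  · have : (0:ℝ) ≤ k1 ^ 2 * Real.sqrt k2 := by positivity
    nlinarith
  · positivity
end

section
/- With α₁, α₂, α₃ the explicit coefficients defined in the context, if a_l ≥ 1, a_r ≥ 1, and v ≥ μ₁ > 0, then (α₁·α₂ − α₃)·α₃ ≥ v³·k₁³·k₂^{3/2}/2 ≥ μ₁³·k₁³·k₂^{3/2}/2 > 0. -/
set_option maxHeartbeats 1000000 in
/-- lower bound on `(α₁·α₂ − α₃)·α₃`. -/
theorem stmt4 (b k1 k2 k3 γ1 γ2 μ1 : ℝ)
    (hb : 0 < b) (hk1 : 0 < k1) (hk2 : 0 < k2) (hk3 : 0 < k3)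
    (hγ1 : 0 < γ1) (hγ2 : 0 < γ2) (hμ1 : 0 < μ1)
    (v w al ar : ℝ) (hal : 1 ≤ al) (har : 1 ≤ ar) (hv : μ1 ≤ v) :
    v ^ 3 * k1 ^ 3 * Real.sqrt (k2 ^ 3) / 2 ≤
        (alpha1 b k1 k2 k3 γ1 γ2 v w al ar * alpha2 b k1 k2 k3 γ1 γ2 v w al ar
            - alpha3 b k1 k2 k3 γ1 γ2 v w al ar) * alpha3 b k1 k2 k3 γ1 γ2 v w al ar
      ∧ μ1 ^ 3 * k1 ^ 3 * Real.sqrt (k2 ^ 3) / 2 ≤ v ^ 3 * k1 ^ 3 * Real.sqrt (k2 ^ 3) / 2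
      ∧ 0 < μ1 ^ 3 * k1 ^ 3 * Real.sqrt (k2 ^ 3) / 2 := by
  have hv0 : 0 < v := lt_of_lt_of_le hμ1 hv
  have hal0 : (0:ℝ) < al := lt_of_lt_of_le one_pos hal
  have har0 : (0:ℝ) < ar := lt_of_lt_of_le one_pos har
  set s : ℝ := Real.sqrt k2 with hs_def
  have hs0 : 0 < s := Real.sqrt_pos.mpr hk2
  have hs2 : s ^ 2 = k2 := Real.sq_sqrt hk2.le
  have hsqrt3 : Real.sqrt (k2 ^ 3) = k2 * s := by
    rw [show k2 ^ 3 = k2 ^ 2 * k2 by ring, Real.sqrt_mul (by positivity), hs_def,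
      Real.sqrt_sq hk2.le]
  -- abbreviations
  set k4 : ℝ := 1 + k2 * k3 ^ 2 with hk4
  set v1 : ℝ := b * w + 2 * v with hv1
  set v2 : ℝ := b * w - 2 * v with hv2
  set N2 : ℝ := al * (γ2 * v1 ^ 2 * k3 * (b ^ 2 * k2 + 4 * k4)
        + 8 * ar * b ^ 2 * k2 * (v * (k1 * k4 + k2 * k3 * v) + 2 * k3 * w ^ 2))
      + ar * γ1 * v2 ^ 2 * k3 * (b ^ 2 * k2 + 4 * k4) with hN2
  set N3 : ℝ := ar * (16 * al * b ^ 2 * k2 * v * (k1 * k2 * k3 * v + w ^ 2)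
        + γ1 * v2 ^ 2 * (k2 * v * (k3 ^ 2 * (b ^ 2 * k2 + 8) + b ^ 2) + 8 * k1 * k3 * k4))
      + al * γ2 * v1 ^ 2 * (k2 * v * (k3 ^ 2 * (b ^ 2 * k2 + 8) + b ^ 2) + 8 * k1 * k3 * k4)
    with hN3
  have h1eq : alpha1 b k1 k2 k3 γ1 γ2 v w al ar = k1 + k4 * v / (2 * k3) := rfl
  have h2eq : alpha2 b k1 k2 k3 γ1 γ2 v w al ar = N2 / (16 * al * ar * b ^ 2 * k2 * k3) := rfl
  have h3eq : alpha3 b k1 k2 k3 γ1 γ2 v w al ar = N3 / (32 * al * ar * b ^ 2 * k2 * k3) := rfl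
  have hD : (0:ℝ) < 32 * al * ar * b ^ 2 * k2 * k3 := by positivity
  have hD2 : (0:ℝ) < 32 * al * ar * b ^ 2 * k2 * k3 ^ 2 := by positivity
  -- lower bound on alpha3
  have hA : k1 * k2 * v ^ 2 / 2 ≤ alpha3 b k1 k2 k3 γ1 γ2 v w al ar := by
    rw [h3eq, le_div_iff₀ hD]
    have t1 : 0 ≤ ar * γ1 * v2 ^ 2 * (k2 * v * (k3 ^ 2 * (b ^ 2 * k2 + 8) + b ^ 2)
        + 8 * k1 * k3 * k4) := by positivity
    have t2 : 0 ≤ al * γ2 * v1 ^ 2 * (k2 * v * (k3 ^ 2 * (b ^ 2 * k2 + 8) + b ^ 2)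
        + 8 * k1 * k3 * k4) := by positivity
    have t3 : 0 ≤ 16 * al * ar * b ^ 2 * k2 * v * w ^ 2 := by positivity
    have key3 : N3 - k1 * k2 * v ^ 2 / 2 * (32 * al * ar * b ^ 2 * k2 * k3)
        = ar * γ1 * v2 ^ 2 * (k2 * v * (k3 ^ 2 * (b ^ 2 * k2 + 8) + b ^ 2)
            + 8 * k1 * k3 * k4)
          + al * γ2 * v1 ^ 2 * (k2 * v * (k3 ^ 2 * (b ^ 2 * k2 + 8) + b ^ 2)
            + 8 * k1 * k3 * k4)
          + 16 * al * ar * b ^ 2 * k2 * v * w ^ 2 := by rw [hN3]; ring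
    linarith [t1, t2, t3, key3]
  have hA' : 0 < k1 * k2 * v ^ 2 / 2 := by positivity
  -- lower bound on alpha1*alpha2 - alpha3
  have hprod : alpha1 b k1 k2 k3 γ1 γ2 v w al ar * alpha2 b k1 k2 k3 γ1 γ2 v w al ar
      - alpha3 b k1 k2 k3 γ1 γ2 v w al ar
      = ((2 * k3 * k1 + k4 * v) * N2 - k3 * N3) / (32 * al * ar * b ^ 2 * k2 * k3 ^ 2) := by
    rw [h1eq, h2eq, h3eq]
    field_simp
    ring
  have hB : k1 ^ 2 * k4 * v / (2 * k3) ≤ alpha1 b k1 k2 k3 γ1 γ2 v w al ar *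
      alpha2 b k1 k2 k3 γ1 γ2 v w al ar - alpha3 b k1 k2 k3 γ1 γ2 v w al ar := by
    rw [hprod, div_le_div_iff₀ (by positivity) hD2]
    have key : ((2 * k3 * k1 + k4 * v) * N2 - k3 * N3) * (2 * k3)
        - k1 ^ 2 * k4 * v * (32 * al * ar * b ^ 2 * k2 * k3 ^ 2)
        = 2 * k3 * ((al * γ2 * v1 ^ 2 + ar * γ1 * v2 ^ 2) * k3
            * (2 * k3 * k1 * b ^ 2 * k2 + 4 * v * (1 + k2 ^ 2 * k3 ^ 4))
          + 8 * al * ar * b ^ 2 * k2 * (4 * k3 ^ 2 * k1 * w ^ 2 + k1 * k4 ^ 2 * v ^ 2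
            + k2 * k3 * k4 * v ^ 3 + 2 * k2 * k3 ^ 3 * v * w ^ 2)) := by
      rw [hN2, hN3, hk4]; ring
    have t1 : 0 ≤ 2 * k3 * ((al * γ2 * v1 ^ 2 + ar * γ1 * v2 ^ 2) * k3
            * (2 * k3 * k1 * b ^ 2 * k2 + 4 * v * (1 + k2 ^ 2 * k3 ^ 4))
          + 8 * al * ar * b ^ 2 * k2 * (4 * k3 ^ 2 * k1 * w ^ 2 + k1 * k4 ^ 2 * v ^ 2
            + k2 * k3 * k4 * v ^ 3 + 2 * k2 * k3 ^ 3 * v * w ^ 2)) := by positivity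
    linarith [key, t1]
  have hB' : k1 ^ 2 * s * v ≤ alpha1 b k1 k2 k3 γ1 γ2 v w al ar *
      alpha2 b k1 k2 k3 γ1 γ2 v w al ar - alpha3 b k1 k2 k3 γ1 γ2 v w al ar := by
    refine le_trans ?_ hB
    rw [le_div_iff₀ (by positivity), hk4]
    have h1 : 0 ≤ k1 ^ 2 * v * (1 - s * k3) ^ 2 := by positivity
    have h2 : k1 ^ 2 * v * (k3 ^ 2 * s ^ 2) = k1 ^ 2 * v * (k3 ^ 2 * k2) := by rw [hs2]
    nlinarith [h1, h2]
  have hB0 : 0 < k1 ^ 2 * s * v := by positivity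
  refine ⟨?_, ?_, ?_⟩
  · calc v ^ 3 * k1 ^ 3 * Real.sqrt (k2 ^ 3) / 2
        = (k1 ^ 2 * s * v) * (k1 * k2 * v ^ 2 / 2) := by rw [hsqrt3]; ring
      _ ≤ _ := by
          apply mul_le_mul hB' hA hA'.le (le_trans hB0.le hB')
  · have h3 : μ1 ^ 3 ≤ v ^ 3 := pow_le_pow_left₀ hμ1.le hv 3
    have : 0 ≤ k1 ^ 3 * Real.sqrt (k2 ^ 3) / 2 := by positivity
    calc μ1 ^ 3 * k1 ^ 3 * Real.sqrt (k2 ^ 3) / 2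
        = μ1 ^ 3 * (k1 ^ 3 * Real.sqrt (k2 ^ 3) / 2) := by ring
      _ ≤ v ^ 3 * (k1 ^ 3 * Real.sqrt (k2 ^ 3) / 2) := by
          exact mul_le_mul_of_nonneg_right h3 this
      _ = v ^ 3 * k1 ^ 3 * Real.sqrt (k2 ^ 3) / 2 := by ring
  · have : 0 < Real.sqrt (k2 ^ 3) := Real.sqrt_pos.mpr (by positivity)
    positivity
end

section
/- With α₁, α₂, α₃, α₄ the explicit coefficients from the context and δ₂ = μ₁³·k₁³·k₂^{3/2}/2, if 1 ≤ a_l ≤ 𝒜, 1 ≤ a_r ≤ 𝒜, μ₁ ≤ v, |b·w + 2v| ≥ μ₂ and |b·w − 2v| ≥ μ₂, then (α₁·α₂ − α₃)·α₃·α₄ ≥ (k₁·k₃·μ₁·μ₂²·δ₂/(4·b²·𝒜))·γ₁ + (k₁·k₃·μ₁·μ₂²·δ₂/(4·b²·𝒜))·γ₂ + (k₄·μ₂⁴·δ₂/(16·b²·k₂·𝒜²))·γ₁·γ₂ > 0. -/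
set_option maxHeartbeats 1000000 in
/-- lower bound on `(α₁·α₂ − α₃)·α₃·α₄` as a polynomial expression in `γ₁, γ₂`. -/
theorem stmt5 (b k1 k2 k3 γ1 γ2 A μ1 μ2 δ2 : ℝ)
    (hb : 0 < b) (hk1 : 0 < k1) (hk2 : 0 < k2) (hk3 : 0 < k3)
    (hγ1 : 0 < γ1) (hγ2 : 0 < γ2) (hA : 1 ≤ A) (hμ1 : 0 < μ1) (hμ2 : 0 < μ2)
    (hδ2 : δ2 = μ1 ^ 3 * k1 ^ 3 * Real.sqrt (k2 ^ 3) / 2)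
    (v w al ar : ℝ) (hal1 : 1 ≤ al) (halA : al ≤ A) (har1 : 1 ≤ ar) (harA : ar ≤ A)
    (hv : μ1 ≤ v) (hv1 : μ2 ≤ |b * w + 2 * v|) (hv2 : μ2 ≤ |b * w - 2 * v|) :
    (k1 * k3 * μ1 * μ2 ^ 2 * δ2 / (4 * b ^ 2 * A)) * γ1
        + (k1 * k3 * μ1 * μ2 ^ 2 * δ2 / (4 * b ^ 2 * A)) * γ2
        + ((1 + k2 * k3 ^ 2) * μ2 ^ 4 * δ2 / (16 * b ^ 2 * k2 * A ^ 2)) * (γ1 * γ2) ≤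
      (alpha1 b k1 k2 k3 γ1 γ2 v w al ar * alpha2 b k1 k2 k3 γ1 γ2 v w al ar
          - alpha3 b k1 k2 k3 γ1 γ2 v w al ar)
        * alpha3 b k1 k2 k3 γ1 γ2 v w al ar * alpha4 b k1 k2 k3 γ1 γ2 v w al ar
      ∧ 0 < (k1 * k3 * μ1 * μ2 ^ 2 * δ2 / (4 * b ^ 2 * A)) * γ1
          + (k1 * k3 * μ1 * μ2 ^ 2 * δ2 / (4 * b ^ 2 * A)) * γ2
          + ((1 + k2 * k3 ^ 2) * μ2 ^ 4 * δ2 / (16 * b ^ 2 * k2 * A ^ 2)) * (γ1 * γ2) := by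
  
  obtain ⟨s, hs, rfl⟩ : ∃ s : ℝ, 0 < s ∧ k2 = s ^ 2 :=
    ⟨Real.sqrt k2, Real.sqrt_pos.mpr hk2, (Real.sq_sqrt hk2.le).symm⟩
  have hA0 : (0:ℝ) < A := lt_of_lt_of_le one_pos hA
  have hal0 : (0:ℝ) < al := lt_of_lt_of_le one_pos hal1
  have har0 : (0:ℝ) < ar := lt_of_lt_of_le one_pos har1
  have hv0 : 0 < v := lt_of_lt_of_le hμ1 hv
  have hδ : δ2 = μ1 ^ 3 * k1 ^ 3 * s ^ 3 / 2 := by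
    rw [hδ2, show ((s:ℝ) ^ 2) ^ 3 = (s ^ 3) ^ 2 by ring, Real.sqrt_sq (by positivity)]
  have hδpos : 0 < δ2 := by
    rw [hδ]
    have : 0 < μ1 ^ 3 * k1 ^ 3 * s ^ 3 :=
      mul_pos (mul_pos (pow_pos hμ1 3) (pow_pos hk1 3)) (pow_pos hs 3)
    linarith
  have hv1sq : μ2 ^ 2 ≤ (b * w + 2 * v) ^ 2 := by
    have h := sq_abs (b * w + 2 * v)
    nlinarith [hv1, hμ2.le, abs_nonneg (b * w + 2 * v)]
  have hv2sq : μ2 ^ 2 ≤ (b * w - 2 * v) ^ 2 := by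
    have h := sq_abs (b * w - 2 * v)
    nlinarith [hv2, hμ2.le, abs_nonneg (b * w - 2 * v)]
  have hb' : b ≠ 0 := hb.ne'
  have hs' : s ≠ 0 := hs.ne'
  have hk3' : k3 ≠ 0 := hk3.ne'
  have hal' : al ≠ 0 := hal0.ne'
  have har' : ar ≠ 0 := har0.ne'
  have hA' : A ≠ 0 := hA0.ne'
  -- lower bound for alpha3
  have e3 : alpha3 b k1 (s ^ 2) k3 γ1 γ2 v w al ar =
      (ar * (16 * al * b ^ 2 * s ^ 2 * v * (k1 * s ^ 2 * k3 * v + w ^ 2)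
        + γ1 * (b * w - 2 * v) ^ 2 * (s ^ 2 * v * (k3 ^ 2 * (b ^ 2 * s ^ 2 + 8) + b ^ 2)
            + 8 * k1 * k3 * (1 + s ^ 2 * k3 ^ 2)))
      + al * γ2 * (b * w + 2 * v) ^ 2 * (s ^ 2 * v * (k3 ^ 2 * (b ^ 2 * s ^ 2 + 8) + b ^ 2)
            + 8 * k1 * k3 * (1 + s ^ 2 * k3 ^ 2)))
      / (32 * al * ar * b ^ 2 * s ^ 2 * k3) := by
    simp only [alpha3]
  have hQ : 0 < s ^ 2 * v * (k3 ^ 2 * (b ^ 2 * s ^ 2 + 8) + b ^ 2)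
      + 8 * k1 * k3 * (1 + s ^ 2 * k3 ^ 2) :=
    add_pos (mul_pos (mul_pos (pow_pos hs 2) hv0) (by positivity))
      (mul_pos (mul_pos (by positivity) hk3) (by positivity))
  have h3 : k1 * s ^ 2 * μ1 ^ 2 / 2 ≤ alpha3 b k1 (s ^ 2) k3 γ1 γ2 v w al ar := by
    rw [e3, le_div_iff₀ (by positivity)]
    nlinarith [mul_nonneg (mul_nonneg (mul_nonneg har0.le hγ1.le) (sq_nonneg (b * w - 2 * v))) hQ.le,
      mul_nonneg (mul_nonneg (mul_nonneg hal0.le hγ2.le) (sq_nonneg (b * w + 2 * v))) hQ.le,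
      mul_nonneg (mul_pos (show (0:ℝ) < 16 * al * ar * b ^ 2 * s ^ 2 by positivity) hv0).le (sq_nonneg w),
      mul_le_mul_of_nonneg_left (show μ1 ^ 2 ≤ v ^ 2 by nlinarith)
        (show (0:ℝ) ≤ 16 * al * ar * b ^ 2 * s ^ 4 * k3 * k1 by positivity)]
  -- lower bound for alpha1*alpha2 - alpha3
  have eG : alpha1 b k1 (s ^ 2) k3 γ1 γ2 v w al ar * alpha2 b k1 (s ^ 2) k3 γ1 γ2 v w al ar
      - alpha3 b k1 (s ^ 2) k3 γ1 γ2 v w al ar =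
      (8 * al * ar * b ^ 2 * s ^ 2 * (2 * k1 ^ 2 * k3 * (1 + s ^ 2 * k3 ^ 2) * v
          + 4 * k1 * k3 ^ 2 * w ^ 2 + k1 * (1 + s ^ 2 * k3 ^ 2) ^ 2 * v ^ 2
          + s ^ 2 * k3 * (1 + s ^ 2 * k3 ^ 2) * v ^ 3 + 2 * s ^ 2 * k3 ^ 3 * v * w ^ 2)
        + ar * γ1 * (b * w - 2 * v) ^ 2 * k3 * (2 * k1 * k3 * b ^ 2 * s ^ 2 + 4 * v * (1 + s ^ 4 * k3 ^ 4))
        + al * γ2 * (b * w + 2 * v) ^ 2 * k3 * (2 * k1 * k3 * b ^ 2 * s ^ 2 + 4 * v * (1 + s ^ 4 * k3 ^ 4)))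
      / (32 * al * ar * b ^ 2 * s ^ 2 * k3 ^ 2) := by
    simp only [alpha1, alpha2, alpha3]
    field_simp
    ring
  have hR : 0 < 2 * k1 * k3 * b ^ 2 * s ^ 2 + 4 * v * (1 + s ^ 4 * k3 ^ 4) :=
    add_pos (by positivity) (mul_pos (mul_pos (by norm_num) hv0) (by positivity))
  have hG : k1 ^ 2 * μ1 * s ≤
      alpha1 b k1 (s ^ 2) k3 γ1 γ2 v w al ar * alpha2 b k1 (s ^ 2) k3 γ1 γ2 v w al ar
      - alpha3 b k1 (s ^ 2) k3 γ1 γ2 v w al ar := by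
    rw [eG, le_div_iff₀ (by positivity)]
    have hk4s : 2 * s * k3 ≤ 1 + s ^ 2 * k3 ^ 2 := by nlinarith [sq_nonneg (1 - s * k3)]
    have hkey : 2 * s * k3 * μ1 ≤ (1 + s ^ 2 * k3 ^ 2) * v :=
      mul_le_mul hk4s hv hμ1.le (by positivity)
    nlinarith [mul_le_mul_of_nonneg_left hkey
        (show (0:ℝ) ≤ 16 * al * ar * b ^ 2 * s ^ 2 * k1 ^ 2 * k3 by positivity),
      mul_nonneg (mul_nonneg (mul_nonneg (mul_nonneg har0.le hγ1.le) (sq_nonneg (b * w - 2 * v))) hk3.le) hR.le,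
      mul_nonneg (mul_nonneg (mul_nonneg (mul_nonneg hal0.le hγ2.le) (sq_nonneg (b * w + 2 * v))) hk3.le) hR.le,
      mul_nonneg (show (0:ℝ) ≤ 32 * al * ar * b ^ 2 * s ^ 2 * k1 * k3 ^ 2 by positivity) (sq_nonneg w),
      mul_nonneg (show (0:ℝ) ≤ 8 * al * ar * b ^ 2 * s ^ 2 * k1 by positivity)
        (mul_nonneg (sq_nonneg (1 + s ^ 2 * k3 ^ 2)) (sq_nonneg v)),
      mul_nonneg (mul_pos (show (0:ℝ) < 8 * al * ar * b ^ 2 * s ^ 4 * k3 * (1 + s ^ 2 * k3 ^ 2) by positivity) hv0).le (sq_nonneg v),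
      mul_nonneg (mul_pos (show (0:ℝ) < 16 * al * ar * b ^ 2 * s ^ 4 * k3 ^ 3 by positivity) hv0).le (sq_nonneg w)]
  -- lower bound for alpha4
  have e4 : alpha4 b k1 (s ^ 2) k3 γ1 γ2 v w al ar =
      (γ2 * (b * w + 2 * v) ^ 2 * (al * ((b * s ^ 2 * v + 2 * w) ^ 2 + 4 * w ^ 2
          + 8 * k1 * s ^ 2 * k3 * v) + 2 * γ1 * (1 + s ^ 2 * k3 ^ 2) * (b * w - 2 * v) ^ 2)
        + ar * γ1 * (b * w - 2 * v) ^ 2 * ((b * s ^ 2 * v - 2 * w) ^ 2 + 4 * w ^ 2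
          + 8 * k1 * s ^ 2 * k3 * v))
      / (32 * al * ar * b ^ 2 * s ^ 2) := by
    simp only [alpha4]
  have hE : k1 * k3 * μ1 * μ2 ^ 2 / (4 * b ^ 2 * A) * γ1
      + k1 * k3 * μ1 * μ2 ^ 2 / (4 * b ^ 2 * A) * γ2
      + (1 + s ^ 2 * k3 ^ 2) * μ2 ^ 4 / (16 * b ^ 2 * s ^ 2 * A ^ 2) * (γ1 * γ2)
      = (4 * s ^ 2 * A * k1 * k3 * μ1 * μ2 ^ 2 * (γ1 + γ2)
          + (1 + s ^ 2 * k3 ^ 2) * μ2 ^ 4 * (γ1 * γ2)) / (16 * b ^ 2 * s ^ 2 * A ^ 2) := by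
    field_simp
    ring
  have hm1 : μ1 * μ2 ^ 2 ≤ v * (b * w - 2 * v) ^ 2 :=
    mul_le_mul hv hv2sq (by positivity) hv0.le
  have hm2 : μ1 * μ2 ^ 2 ≤ v * (b * w + 2 * v) ^ 2 :=
    mul_le_mul hv hv1sq (by positivity) hv0.le
  have hT1 : al * (μ1 * μ2 ^ 2) ≤ A * (v * (b * w - 2 * v) ^ 2) :=
    mul_le_mul halA hm1 (by positivity) hA0.le
  have hT2 : ar * (μ1 * μ2 ^ 2) ≤ A * (v * (b * w + 2 * v) ^ 2) :=
    mul_le_mul harA hm2 (by positivity) hA0.le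
  have hT3 : al * ar * (μ2 ^ 2 * μ2 ^ 2) ≤ A * A * ((b * w + 2 * v) ^ 2 * (b * w - 2 * v) ^ 2) :=
    mul_le_mul (mul_le_mul halA harA har0.le hA0.le)
      (mul_le_mul hv1sq hv2sq (by positivity) (sq_nonneg _)) (by positivity)
      (by positivity)
  have h4 : k1 * k3 * μ1 * μ2 ^ 2 / (4 * b ^ 2 * A) * γ1
      + k1 * k3 * μ1 * μ2 ^ 2 / (4 * b ^ 2 * A) * γ2
      + (1 + s ^ 2 * k3 ^ 2) * μ2 ^ 4 / (16 * b ^ 2 * s ^ 2 * A ^ 2) * (γ1 * γ2)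
      ≤ alpha4 b k1 (s ^ 2) k3 γ1 γ2 v w al ar := by
    rw [e4, hE, div_le_div_iff₀ (by positivity) (by positivity)]
    linarith [mul_le_mul_of_nonneg_left hT1
        (show (0:ℝ) ≤ 128 * ar * b ^ 2 * s ^ 4 * A * k1 * k3 * γ1 by positivity),
      mul_le_mul_of_nonneg_left hT2
        (show (0:ℝ) ≤ 128 * al * b ^ 2 * s ^ 4 * A * k1 * k3 * γ2 by positivity),
      mul_le_mul_of_nonneg_left hT3
        (show (0:ℝ) ≤ 32 * b ^ 2 * s ^ 2 * (1 + s ^ 2 * k3 ^ 2) * γ1 * γ2 by positivity),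
      mul_nonneg (sq_nonneg (b * s * A))
        (mul_nonneg (mul_nonneg (mul_nonneg hγ2.le (sq_nonneg (b * w + 2 * v))) hal0.le)
          (sq_nonneg (b * s ^ 2 * v + 2 * w))),
      mul_nonneg (sq_nonneg (b * s * A))
        (mul_nonneg (mul_nonneg (mul_nonneg hγ2.le (sq_nonneg (b * w + 2 * v))) hal0.le)
          (sq_nonneg w)),
      mul_nonneg (sq_nonneg (b * s * A))
        (mul_nonneg (mul_nonneg (mul_nonneg hγ1.le (sq_nonneg (b * w - 2 * v))) har0.le)
          (sq_nonneg (b * s ^ 2 * v - 2 * w))),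
      mul_nonneg (sq_nonneg (b * s * A))
        (mul_nonneg (mul_nonneg (mul_nonneg hγ1.le (sq_nonneg (b * w - 2 * v))) har0.le)
          (sq_nonneg w))]
  -- positivity of the bounds
  have hgx : 0 < k1 ^ 2 * μ1 * s := mul_pos (mul_pos (pow_pos hk1 2) hμ1) hs
  have hgy : 0 < k1 * s ^ 2 * μ1 ^ 2 / 2 := by
    have : 0 < k1 * s ^ 2 * μ1 ^ 2 := mul_pos (mul_pos hk1 (pow_pos hs 2)) (pow_pos hμ1 2)
    linarith
  have hC1 : 0 < k1 * k3 * μ1 * μ2 ^ 2 / (4 * b ^ 2 * A) :=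
    div_pos (mul_pos (mul_pos (mul_pos hk1 hk3) hμ1) (pow_pos hμ2 2))
      (mul_pos (mul_pos (by norm_num) (pow_pos hb 2)) hA0)
  have hC2 : 0 < (1 + s ^ 2 * k3 ^ 2) * μ2 ^ 4 / (16 * b ^ 2 * s ^ 2 * A ^ 2) :=
    div_pos (mul_pos (by positivity) (pow_pos hμ2 4))
      (mul_pos (mul_pos (mul_pos (by norm_num) (pow_pos hb 2)) (pow_pos hs 2)) (pow_pos hA0 2))
  have hBz : 0 < k1 * k3 * μ1 * μ2 ^ 2 / (4 * b ^ 2 * A) * γ1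
      + k1 * k3 * μ1 * μ2 ^ 2 / (4 * b ^ 2 * A) * γ2
      + (1 + s ^ 2 * k3 ^ 2) * μ2 ^ 4 / (16 * b ^ 2 * s ^ 2 * A ^ 2) * (γ1 * γ2) :=
    add_pos (add_pos (mul_pos hC1 hγ1) (mul_pos hC1 hγ2)) (mul_pos hC2 (mul_pos hγ1 hγ2))
  have hx0 : 0 < alpha1 b k1 (s ^ 2) k3 γ1 γ2 v w al ar * alpha2 b k1 (s ^ 2) k3 γ1 γ2 v w al ar
      - alpha3 b k1 (s ^ 2) k3 γ1 γ2 v w al ar := lt_of_lt_of_le hgx hG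
  have hy0 : 0 < alpha3 b k1 (s ^ 2) k3 γ1 γ2 v w al ar := lt_of_lt_of_le hgy h3
  have step1 : k1 ^ 2 * μ1 * s * (k1 * s ^ 2 * μ1 ^ 2 / 2) ≤
      (alpha1 b k1 (s ^ 2) k3 γ1 γ2 v w al ar * alpha2 b k1 (s ^ 2) k3 γ1 γ2 v w al ar
        - alpha3 b k1 (s ^ 2) k3 γ1 γ2 v w al ar) * alpha3 b k1 (s ^ 2) k3 γ1 γ2 v w al ar :=
    mul_le_mul hG h3 hgy.le hx0.le
  have step2 : k1 ^ 2 * μ1 * s * (k1 * s ^ 2 * μ1 ^ 2 / 2)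
      * (k1 * k3 * μ1 * μ2 ^ 2 / (4 * b ^ 2 * A) * γ1
        + k1 * k3 * μ1 * μ2 ^ 2 / (4 * b ^ 2 * A) * γ2
        + (1 + s ^ 2 * k3 ^ 2) * μ2 ^ 4 / (16 * b ^ 2 * s ^ 2 * A ^ 2) * (γ1 * γ2)) ≤
      (alpha1 b k1 (s ^ 2) k3 γ1 γ2 v w al ar * alpha2 b k1 (s ^ 2) k3 γ1 γ2 v w al ar
        - alpha3 b k1 (s ^ 2) k3 γ1 γ2 v w al ar) * alpha3 b k1 (s ^ 2) k3 γ1 γ2 v w al ar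
      * alpha4 b k1 (s ^ 2) k3 γ1 γ2 v w al ar :=
    mul_le_mul step1 h4 hBz.le (mul_nonneg hx0.le hy0.le)
  constructor
  · have eqT : k1 * k3 * μ1 * μ2 ^ 2 * δ2 / (4 * b ^ 2 * A) * γ1
        + k1 * k3 * μ1 * μ2 ^ 2 * δ2 / (4 * b ^ 2 * A) * γ2
        + (1 + s ^ 2 * k3 ^ 2) * μ2 ^ 4 * δ2 / (16 * b ^ 2 * s ^ 2 * A ^ 2) * (γ1 * γ2)
        = k1 ^ 2 * μ1 * s * (k1 * s ^ 2 * μ1 ^ 2 / 2)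
        * (k1 * k3 * μ1 * μ2 ^ 2 / (4 * b ^ 2 * A) * γ1
          + k1 * k3 * μ1 * μ2 ^ 2 / (4 * b ^ 2 * A) * γ2
          + (1 + s ^ 2 * k3 ^ 2) * μ2 ^ 4 / (16 * b ^ 2 * s ^ 2 * A ^ 2) * (γ1 * γ2)) := by
      rw [hδ]; field_simp
    rw [eqT]
    exact step2
  · have hC1' : 0 < k1 * k3 * μ1 * μ2 ^ 2 * δ2 / (4 * b ^ 2 * A) :=
      div_pos (mul_pos (mul_pos (mul_pos (mul_pos hk1 hk3) hμ1) (pow_pos hμ2 2)) hδpos)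
        (mul_pos (mul_pos (by norm_num) (pow_pos hb 2)) hA0)
    have hC2' : 0 < (1 + s ^ 2 * k3 ^ 2) * μ2 ^ 4 * δ2 / (16 * b ^ 2 * s ^ 2 * A ^ 2) :=
      div_pos (mul_pos (mul_pos (by positivity) (pow_pos hμ2 4)) hδpos)
        (mul_pos (mul_pos (mul_pos (by norm_num) (pow_pos hb 2)) (pow_pos hs 2)) (pow_pos hA0 2))
    exact add_pos (add_pos (mul_pos hC1' hγ1) (mul_pos hC1' hγ2)) (mul_pos hC2' (mul_pos hγ1 hγ2))
end

section
/- With α₁, α₂, α₃, α₄, α₅ the explicit coefficients defined in the context, there exists δ₁ > 0 (depending only on b, k₁, k₂, k₃, γ₁, γ₂, 𝒜, M, μ₁, μ₂) such that for all v, w, a_l, a_r satisfying 1 ≤ a_l ≤ 𝒜, 1 ≤ a_r ≤ 𝒜, μ₁ ≤ v ≤ M, |w| ≤ M, |b·w + 2v| ≥ μ₂ and |b·w − 2v| ≥ μ₂, one has α_i ≥ δ₁ for every i ∈ {1,2,3,4,5}. -/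
set_option maxHeartbeats 1000000 in
/-- uniform positive lower bound `δ₁` on all the coefficients `αᵢ`. -/
theorem stmt7 (b k1 k2 k3 γ1 γ2 A M μ1 μ2 : ℝ)
    (hb : 0 < b) (hk1 : 0 < k1) (hk2 : 0 < k2) (hk3 : 0 < k3)
    (hγ1 : 0 < γ1) (hγ2 : 0 < γ2) (hA : 1 ≤ A) (hM : 0 < M) (hμ1 : 0 < μ1) (hμ2 : 0 < μ2) :
    ∃ δ1 > 0, ∀ v w al ar : ℝ,
      1 ≤ al → al ≤ A → 1 ≤ ar → ar ≤ A → μ1 ≤ v → v ≤ M → |w| ≤ M →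
      μ2 ≤ |b * w + 2 * v| → μ2 ≤ |b * w - 2 * v| →
        δ1 ≤ alpha1 b k1 k2 k3 γ1 γ2 v w al ar
          ∧ δ1 ≤ alpha2 b k1 k2 k3 γ1 γ2 v w al ar
          ∧ δ1 ≤ alpha3 b k1 k2 k3 γ1 γ2 v w al ar
          ∧ δ1 ≤ alpha4 b k1 k2 k3 γ1 γ2 v w al ar
          ∧ δ1 ≤ alpha5 b k1 k2 k3 γ1 γ2 v w al ar := by
  have hk4 : (0:ℝ) < 1 + k2 * k3 ^ 2 := by positivity
  set k4 : ℝ := 1 + k2 * k3 ^ 2 with hk4def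
  have hA0 : (0:ℝ) < A := lt_of_lt_of_le one_pos hA
  refine ⟨min k1 (min (γ2 * μ2 ^ 2 * k3 * (b ^ 2 * k2 + 4 * k4) / (16 * A * A * b ^ 2 * k2 * k3))
    (min (k1 * k2 * μ1 ^ 2 / (2 * A * A))
      (min (γ2 * μ2 ^ 2 * k1 * k3 * μ1 / (4 * A * A * b ^ 2))
        (γ1 * γ2 * k3 * μ1 * μ2 ^ 4 / (16 * A * A * b ^ 2))))), by positivity, ?_⟩
  intro v w al ar hal1 halA har1 harA hv1 hvM hwM h1 h2
  have hal0 : (0:ℝ) < al := lt_of_lt_of_le one_pos hal1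
  have har0 : (0:ℝ) < ar := lt_of_lt_of_le one_pos har1
  have hv0 : 0 < v := lt_of_lt_of_le hμ1 hv1
  have hv1sq : μ2 ^ 2 ≤ (b * w + 2 * v) ^ 2 := by
    have h := pow_le_pow_left₀ hμ2.le h1 2
    rwa [sq_abs] at h
  have hv2sq : μ2 ^ 2 ≤ (b * w - 2 * v) ^ 2 := by
    have h := pow_le_pow_left₀ hμ2.le h2 2
    rwa [sq_abs] at h
  have halar : al * ar ≤ A * A := mul_le_mul halA harA har0.le hA0.le
  refine ⟨?_, ?_, ?_, ?_, ?_⟩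
  · refine le_trans (min_le_left _ _) ?_
    show k1 ≤ k1 + k4 * v / (2 * k3)
    have : 0 ≤ k4 * v / (2 * k3) := by positivity
    linarith
  · refine le_trans (le_trans (min_le_right _ _) (min_le_left _ _)) ?_
    show _ ≤ (al * (γ2 * (b * w + 2 * v) ^ 2 * k3 * (b ^ 2 * k2 + 4 * k4)
        + 8 * ar * b ^ 2 * k2 * (v * (k1 * k4 + k2 * k3 * v) + 2 * k3 * w ^ 2))
      + ar * γ1 * (b * w - 2 * v) ^ 2 * k3 * (b ^ 2 * k2 + 4 * k4)) / (16 * al * ar * b ^ 2 * k2 * k3)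
    have hC : (0:ℝ) ≤ γ2 * k3 * (b ^ 2 * k2 + 4 * k4) := by positivity
    have hX : (0:ℝ) ≤ γ2 * (b * w + 2 * v) ^ 2 * k3 * (b ^ 2 * k2 + 4 * k4) := by positivity
    have hY : (0:ℝ) ≤ al * (8 * ar * b ^ 2 * k2 * (v * (k1 * k4 + k2 * k3 * v) + 2 * k3 * w ^ 2)) := by positivity
    have hZ : (0:ℝ) ≤ ar * γ1 * (b * w - 2 * v) ^ 2 * k3 * (b ^ 2 * k2 + 4 * k4) := by positivity
    have hnum : γ2 * μ2 ^ 2 * k3 * (b ^ 2 * k2 + 4 * k4)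
        ≤ al * (γ2 * (b * w + 2 * v) ^ 2 * k3 * (b ^ 2 * k2 + 4 * k4)
          + 8 * ar * b ^ 2 * k2 * (v * (k1 * k4 + k2 * k3 * v) + 2 * k3 * w ^ 2))
        + ar * γ1 * (b * w - 2 * v) ^ 2 * k3 * (b ^ 2 * k2 + 4 * k4) := by
      have s1 := mul_le_mul_of_nonneg_right hv1sq hC
      have s2 := le_mul_of_one_le_left hX hal1
      have : γ2 * μ2 ^ 2 * k3 * (b ^ 2 * k2 + 4 * k4)
          ≤ al * (γ2 * (b * w + 2 * v) ^ 2 * k3 * (b ^ 2 * k2 + 4 * k4)) := by linarith [s1, s2]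
      have hexp : al * (γ2 * (b * w + 2 * v) ^ 2 * k3 * (b ^ 2 * k2 + 4 * k4)
          + 8 * ar * b ^ 2 * k2 * (v * (k1 * k4 + k2 * k3 * v) + 2 * k3 * w ^ 2))
          + ar * γ1 * (b * w - 2 * v) ^ 2 * k3 * (b ^ 2 * k2 + 4 * k4)
          = al * (γ2 * (b * w + 2 * v) ^ 2 * k3 * (b ^ 2 * k2 + 4 * k4))
          + al * (8 * ar * b ^ 2 * k2 * (v * (k1 * k4 + k2 * k3 * v) + 2 * k3 * w ^ 2))
          + ar * γ1 * (b * w - 2 * v) ^ 2 * k3 * (b ^ 2 * k2 + 4 * k4) := by ring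
      rw [hexp]
      linarith [hY, hZ]
    refine div_le_div₀ (le_trans (by positivity) hnum) hnum (by positivity) ?_
    linarith [mul_le_mul_of_nonneg_right halar (show (0:ℝ) ≤ 16 * b ^ 2 * k2 * k3 by positivity)]
  · refine le_trans (le_trans (min_le_right _ _) (le_trans (min_le_right _ _) (min_le_left _ _))) ?_
    show _ ≤ (ar * (16 * al * b ^ 2 * k2 * v * (k1 * k2 * k3 * v + w ^ 2)
        + γ1 * (b * w - 2 * v) ^ 2 * (k2 * v * (k3 ^ 2 * (b ^ 2 * k2 + 8) + b ^ 2) + 8 * k1 * k3 * k4))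
      + al * γ2 * (b * w + 2 * v) ^ 2 * (k2 * v * (k3 ^ 2 * (b ^ 2 * k2 + 8) + b ^ 2) + 8 * k1 * k3 * k4))
      / (32 * al * ar * b ^ 2 * k2 * k3)
    have hvv : μ1 ^ 2 ≤ v ^ 2 := by nlinarith
    have hbase : 16 * b ^ 2 * k2 * μ1 ^ 2 * k1 * k2 * k3
        ≤ 16 * b ^ 2 * k2 * v * (k1 * k2 * k3 * v + w ^ 2) := by
      nlinarith [mul_nonneg (by positivity : (0:ℝ) ≤ 16 * b ^ 2 * k2 * k1 * k2 * k3) (sub_nonneg.2 hvv),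
        mul_nonneg (by positivity : (0:ℝ) ≤ 16 * b ^ 2 * k2 * v) (sq_nonneg w)]
    have hX : (0:ℝ) ≤ 16 * b ^ 2 * k2 * v * (k1 * k2 * k3 * v + w ^ 2) := by positivity
    have s2 := le_mul_of_one_le_left hX hal1
    have hX2 : (0:ℝ) ≤ al * (16 * b ^ 2 * k2 * v * (k1 * k2 * k3 * v + w ^ 2)) := by positivity
    have s3 := le_mul_of_one_le_left hX2 har1
    have hY : (0:ℝ) ≤ ar * (γ1 * (b * w - 2 * v) ^ 2 * (k2 * v * (k3 ^ 2 * (b ^ 2 * k2 + 8) + b ^ 2) + 8 * k1 * k3 * k4)) := by positivity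
    have hZ : (0:ℝ) ≤ al * γ2 * (b * w + 2 * v) ^ 2 * (k2 * v * (k3 ^ 2 * (b ^ 2 * k2 + 8) + b ^ 2) + 8 * k1 * k3 * k4) := by positivity
    have hnum : 16 * b ^ 2 * k2 * μ1 ^ 2 * k1 * k2 * k3
        ≤ ar * (16 * al * b ^ 2 * k2 * v * (k1 * k2 * k3 * v + w ^ 2)
          + γ1 * (b * w - 2 * v) ^ 2 * (k2 * v * (k3 ^ 2 * (b ^ 2 * k2 + 8) + b ^ 2) + 8 * k1 * k3 * k4))
        + al * γ2 * (b * w + 2 * v) ^ 2 * (k2 * v * (k3 ^ 2 * (b ^ 2 * k2 + 8) + b ^ 2) + 8 * k1 * k3 * k4) := by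
      have hexp : ar * (16 * al * b ^ 2 * k2 * v * (k1 * k2 * k3 * v + w ^ 2)
          + γ1 * (b * w - 2 * v) ^ 2 * (k2 * v * (k3 ^ 2 * (b ^ 2 * k2 + 8) + b ^ 2) + 8 * k1 * k3 * k4))
          + al * γ2 * (b * w + 2 * v) ^ 2 * (k2 * v * (k3 ^ 2 * (b ^ 2 * k2 + 8) + b ^ 2) + 8 * k1 * k3 * k4)
          = ar * (al * (16 * b ^ 2 * k2 * v * (k1 * k2 * k3 * v + w ^ 2)))
          + ar * (γ1 * (b * w - 2 * v) ^ 2 * (k2 * v * (k3 ^ 2 * (b ^ 2 * k2 + 8) + b ^ 2) + 8 * k1 * k3 * k4))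
          + al * γ2 * (b * w + 2 * v) ^ 2 * (k2 * v * (k3 ^ 2 * (b ^ 2 * k2 + 8) + b ^ 2) + 8 * k1 * k3 * k4) := by
        ring
      rw [hexp]
      linarith [hbase, s2, s3, hY, hZ]
    have hd : (16 * b ^ 2 * k2 * μ1 ^ 2 * k1 * k2 * k3) / (32 * A * A * b ^ 2 * k2 * k3)
        = k1 * k2 * μ1 ^ 2 / (2 * A * A) := by field_simp; ring
    rw [← hd]
    refine div_le_div₀ (le_trans (by positivity) hnum) hnum (by positivity) ?_
    linarith [mul_le_mul_of_nonneg_right halar (show (0:ℝ) ≤ 32 * b ^ 2 * k2 * k3 by positivity)]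
  · refine le_trans (le_trans (min_le_right _ _) (le_trans (min_le_right _ _)
      (le_trans (min_le_right _ _) (min_le_left _ _)))) ?_
    show _ ≤ (γ2 * (b * w + 2 * v) ^ 2 * (al * ((b * k2 * v + 2 * w) ^ 2 + 4 * w ^ 2 + 8 * k1 * k2 * k3 * v)
        + 2 * γ1 * k4 * (b * w - 2 * v) ^ 2)
      + ar * γ1 * (b * w - 2 * v) ^ 2 * ((b * k2 * v - 2 * w) ^ 2 + 4 * w ^ 2 + 8 * k1 * k2 * k3 * v))
      / (32 * al * ar * b ^ 2 * k2)
    have hmm : μ2 ^ 2 * μ1 ≤ (b * w + 2 * v) ^ 2 * v :=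
      mul_le_mul hv1sq hv1 (by positivity) (by positivity)
    have ha : γ2 * μ2 ^ 2 * 8 * k1 * k2 * k3 * μ1
        ≤ γ2 * (b * w + 2 * v) ^ 2 * (8 * k1 * k2 * k3 * v) := by
      linarith [mul_le_mul_of_nonneg_left hmm
        (by positivity : (0:ℝ) ≤ γ2 * 8 * k1 * k2 * k3)]
    have hin : 8 * k1 * k2 * k3 * v ≤ al * ((b * k2 * v + 2 * w) ^ 2 + 4 * w ^ 2 + 8 * k1 * k2 * k3 * v)
        + 2 * γ1 * k4 * (b * w - 2 * v) ^ 2 := by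
      have hW : (0:ℝ) ≤ 8 * k1 * k2 * k3 * v := by positivity
      have s := le_mul_of_one_le_left hW hal1
      have hexp : al * ((b * k2 * v + 2 * w) ^ 2 + 4 * w ^ 2 + 8 * k1 * k2 * k3 * v)
          + 2 * γ1 * k4 * (b * w - 2 * v) ^ 2
          = al * ((b * k2 * v + 2 * w) ^ 2 + 4 * w ^ 2) + al * (8 * k1 * k2 * k3 * v)
          + 2 * (γ1 * k4 * (b * w - 2 * v) ^ 2) := by ring
      rw [hexp]
      linarith [s, mul_nonneg hal0.le (by positivity : (0:ℝ) ≤ (b * k2 * v + 2 * w) ^ 2 + 4 * w ^ 2),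
        mul_nonneg (mul_nonneg hγ1.le hk4.le) (sq_nonneg (b * w - 2 * v))]
    have hb1 := mul_le_mul_of_nonneg_left hin
      (by positivity : (0:ℝ) ≤ γ2 * (b * w + 2 * v) ^ 2)
    have hc : (0:ℝ) ≤ ar * γ1 * (b * w - 2 * v) ^ 2 * ((b * k2 * v - 2 * w) ^ 2 + 4 * w ^ 2 + 8 * k1 * k2 * k3 * v) := by positivity
    have hnum : γ2 * μ2 ^ 2 * 8 * k1 * k2 * k3 * μ1
        ≤ γ2 * (b * w + 2 * v) ^ 2 * (al * ((b * k2 * v + 2 * w) ^ 2 + 4 * w ^ 2 + 8 * k1 * k2 * k3 * v)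
          + 2 * γ1 * k4 * (b * w - 2 * v) ^ 2)
        + ar * γ1 * (b * w - 2 * v) ^ 2 * ((b * k2 * v - 2 * w) ^ 2 + 4 * w ^ 2 + 8 * k1 * k2 * k3 * v) := by
      linarith [ha, hb1, hc]
    have hd : (γ2 * μ2 ^ 2 * 8 * k1 * k2 * k3 * μ1) / (32 * A * A * b ^ 2 * k2)
        = γ2 * μ2 ^ 2 * k1 * k3 * μ1 / (4 * A * A * b ^ 2) := by field_simp; ring
    rw [← hd]
    refine div_le_div₀ (le_trans (by positivity) hnum) hnum (by positivity) ?_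
    linarith [mul_le_mul_of_nonneg_right halar (show (0:ℝ) ≤ 32 * b ^ 2 * k2 by positivity)]
  · refine le_trans (le_trans (min_le_right _ _) (le_trans (min_le_right _ _)
      (le_trans (min_le_right _ _) (min_le_right _ _)))) ?_
    show _ ≤ γ1 * γ2 * k3 * v * (b * w + 2 * v) ^ 2 * (b * w - 2 * v) ^ 2 / (16 * al * ar * b ^ 2)
    have h4 : μ2 ^ 2 * μ2 ^ 2 ≤ (b * w + 2 * v) ^ 2 * (b * w - 2 * v) ^ 2 :=
      mul_le_mul hv1sq hv2sq (by positivity) (by positivity)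
    have hμv : γ1 * γ2 * k3 * μ1 ≤ γ1 * γ2 * k3 * v := by
      nlinarith [mul_pos (mul_pos hγ1 hγ2) hk3]
    have hnum : γ1 * γ2 * k3 * μ1 * μ2 ^ 4
        ≤ γ1 * γ2 * k3 * v * (b * w + 2 * v) ^ 2 * (b * w - 2 * v) ^ 2 := by
      calc γ1 * γ2 * k3 * μ1 * μ2 ^ 4 = (γ1 * γ2 * k3 * μ1) * (μ2 ^ 2 * μ2 ^ 2) := by ring
        _ ≤ (γ1 * γ2 * k3 * v) * ((b * w + 2 * v) ^ 2 * (b * w - 2 * v) ^ 2) :=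
            mul_le_mul hμv h4 (by positivity) (by positivity)
        _ = γ1 * γ2 * k3 * v * (b * w + 2 * v) ^ 2 * (b * w - 2 * v) ^ 2 := by ring
    refine div_le_div₀ (le_trans (by positivity) hnum) hnum (by positivity) ?_
    linarith [mul_le_mul_of_nonneg_right halar (show (0:ℝ) ≤ 16 * b ^ 2 by positivity)]
end
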